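/- arXiv:1010.1394 — 3 statements merged into one kernel-verified Lean document; each statement's English description precedes it below -/
import Mathlib

section
/- Let d ≥ 1, 0 < α ≤ 1/2, set k(α) = ⌈log₂(4√d/α)⌉ and t_{d,α}(ε) = 2^{-d}·t_{d,k(α)}(ε). Then there exists ε₀ > 0 (depending on d and α) such that for all ε ∈ [0, ε₀] one has t_{d,α}(ε) > c_d·α^d, where c_d = 2/(5·log 2·2^{4d}·d^{d/2}). In particular t_{d,α}(0) > c_d·α^d. -/
open MeasureTheory Filter Metric Set
open scoped ENNReal NNReal

/-- `s_{d,k}(ε)`: the largest real solution `s` of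
`(1−ε)·log((2^d−1)·(Σ_{i=1}^k 2^{-s·i})/(1−ε)) + ε·log(1/ε) = s·ε·log(2^k)`
(with the convention `0·log 0 = 0`). -/
noncomputable def sdk (d k : ℕ) (ε : ℝ) : ℝ :=
  sSup {s : ℝ |
    (1 - ε) * Real.log (((2 : ℝ) ^ d - 1) *
        (∑ i ∈ Finset.range k, (2 : ℝ) ^ (-(s * ((i : ℝ) + 1)))) / (1 - ε))
      + ε * Real.log (1 / ε) = s * ε * Real.log ((2 : ℝ) ^ k)}

/-- `t_{d,k}(ε) = d − s_{d,k}(ε)`. -/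
noncomputable def tdk (d k : ℕ) (ε : ℝ) : ℝ := d - sdk d k ε

open Real Finset Topology

/-! The sum `g(s) = (2^d - 1) Σ_{i=1}^k 2^{-s i}` decreases in `s`. At `s = d - δ` with
`δ = 2 / (5 log 2 · 2^{dk})` it is a truncated geometric series whose ratio exceeds `2^{-d}` so
little that its value is still `< 1`. There the left side of the defining equation is
`log g(s) < 0` at `ε = 0`, hence, since `ε log(1/ε) → 0`, below the right side for all small `ε`.
As the left side decreases and the right side increases in `s`, every solution is `≤ d - δ`,
i.e. `t_{d,k}(ε) ≥ δ`; and `2^k < 8√d/α` makes `2^{-d} δ > c_d α^d`. -/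

noncomputable def sdkSum (d k : ℕ) (s : ℝ) : ℝ :=
  ((2 : ℝ) ^ d - 1) * ∑ i ∈ range k, (2 : ℝ) ^ (-(s * ((i : ℝ) + 1)))

lemma sdk_eq_sSup_sdkSum (d k : ℕ) (ε : ℝ) :
    sdk d k ε = sSup {s : ℝ | (1 - ε) * log (sdkSum d k s / (1 - ε)) + ε * log (1 / ε)
      = s * ε * log ((2 : ℝ) ^ k)} := rfl

lemma one_le_two_pow_sub_one {d : ℕ} (hd : 1 ≤ d) : (1 : ℝ) ≤ 2 ^ d - 1 := by
  have : (2 : ℝ) ≤ 2 ^ d := by simpa using pow_le_pow_right₀ one_le_two hd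
  linarith

lemma sdkSum_pos {d k : ℕ} (hd : 1 ≤ d) (hk : 1 ≤ k) (s : ℝ) : 0 < sdkSum d k s :=
  mul_pos (one_pos.trans_le (one_le_two_pow_sub_one hd)) <|
    sum_pos (fun _ _ ↦ by positivity) ⟨0, mem_range.mpr hk⟩

lemma sdkSum_antitone (d k : ℕ) : Antitone (sdkSum d k) := by
  intro s t hst
  unfold sdkSum
  gcongr
  · linarith [one_le_pow₀ (M₀ := ℝ) one_le_two (n := d)]
  · exact one_le_two

lemma sdkSum_eq_geom (d k : ℕ) (s : ℝ) :
    sdkSum d k s = ((2 : ℝ) ^ d - 1) * ∑ i ∈ range k, ((2 : ℝ) ^ (-s)) ^ (i + 1) := by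
  unfold sdkSum
  congr 1
  refine sum_congr rfl fun i _ ↦ ?_
  rw [← rpow_natCast, ← rpow_mul zero_le_two]
  push_cast
  ring_nf

lemma geom_sum_lt_one {P r : ℝ} (k : ℕ) (hr : r < 1)
    (h : P * r - 1 < (P - 1) * r ^ (k + 1)) :
    (P - 1) * ∑ i ∈ range k, r ^ (i + 1) < 1 := by
  have hgeom := geom_sum_mul_neg r k
  simp only [pow_succ', ← mul_sum]
  refine lt_of_mul_lt_mul_right (a := 1 - r) ?_ (by linarith)
  calc (P - 1) * (r * ∑ i ∈ range k, r ^ i) * (1 - r)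
      = (P - 1) * r * ((∑ i ∈ range k, r ^ i) * (1 - r)) := by ring
    _ < 1 * (1 - r) := by rw [hgeom]; linear_combination h

lemma continuous_mul_log_one_div : Continuous fun x : ℝ ↦ x * log (1 / x) :=
  continuous_negMulLog.congr fun x ↦ by simp [negMulLog, log_inv]

lemma sdk_le_of_lhs_lt_rhs {d k : ℕ} {ε B : ℝ} (hd : 1 ≤ d) (hk : 1 ≤ k) (hε₀ : 0 ≤ ε)
    (hε₁ : ε < 1) (hB : 0 ≤ B)
    (h : (1 - ε) * log (sdkSum d k B / (1 - ε)) + ε * log (1 / ε) < B * ε * log ((2 : ℝ) ^ k)) :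
    sdk d k ε ≤ B := by
  rw [sdk_eq_sSup_sdkSum]
  refine Real.sSup_le (fun s (hs : _ = _) ↦ ?_) hB
  by_contra! hBs
  have hlog : log (sdkSum d k s / (1 - ε)) ≤ log (sdkSum d k B / (1 - ε)) :=
    log_le_log (div_pos (sdkSum_pos hd hk s) (by linarith))
      (div_le_div_of_nonneg_right (sdkSum_antitone d k hBs.le) (by linarith))
  have hK : 0 ≤ ε * log ((2 : ℝ) ^ k) := mul_nonneg hε₀ (log_nonneg (one_le_pow₀ one_le_two))
  nlinarith [mul_le_mul_of_nonneg_left hlog (sub_nonneg.2 hε₁.le),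
    mul_le_mul_of_nonneg_right hBs.le hK]

lemma eventually_sdk_le {d k : ℕ} {B : ℝ} (hd : 1 ≤ d) (hk : 1 ≤ k) (hB : 0 ≤ B)
    (hsum : sdkSum d k B < 1) : ∀ᶠ ε in 𝓝[≥] 0, sdk d k ε ≤ B := by
  set F : ℝ → ℝ := fun ε ↦ (1 - ε) * log (sdkSum d k B / (1 - ε)) + ε * log (1 / ε)
    - B * ε * log ((2 : ℝ) ^ k)
  have hpos := sdkSum_pos hd hk B
  have hF : ContinuousAt F 0 := by
    have := continuous_mul_log_one_div.continuousAt (x := 0)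
    fun_prop (disch := simp [hpos.ne'])
  have hF0 : F 0 < 0 := by simpa [F] using log_neg hpos hsum
  filter_upwards [nhdsWithin_le_nhds ((hF.eventually_lt continuousAt_const hF0).and
    (eventually_lt_nhds one_pos)), self_mem_nhdsWithin] with ε ⟨hFε, hε₁⟩ hε₀
  exact sdk_le_of_lhs_lt_rhs hd hk hε₀ hε₁ hB (sub_neg.1 hFε)

lemma exp_sub_one_lt {y : ℝ} (h₀ : 0 < y) (h₁ : y ≤ 1 / 5) : exp y - 1 < 5 / 4 * y := by
  have hexp := exp_bound_div_one_sub_of_interval' h₀ (by linarith)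
  have hdiv : 1 / (1 - y) ≤ 1 + 5 / 4 * y := by
    rw [div_le_iff₀ (by linarith)]
    nlinarith
  linarith

lemma sdkSum_lt_one {d : ℕ} (hd : 1 ≤ d) (k : ℕ) {δ : ℝ} (hδ : 0 ≤ δ)
    (h : (2 : ℝ) ^ δ - 1 < 1 / (2 * 2 ^ (d * k))) : sdkSum d k (d - δ) < 1 := by
  rw [pow_mul] at h
  set P : ℝ := 2 ^ d
  set r : ℝ := 2 ^ (-(d - δ))
  have hP : 2 ≤ P := by simpa using pow_le_pow_right₀ one_le_two hd
  have hPr : P * r = 2 ^ δ := by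
    simp only [P, r]
    rw [← rpow_natCast, ← rpow_add two_pos]
    ring_nf
  have hrP : P⁻¹ ≤ r := by
    rw [inv_le_iff_one_le_mul₀' (by positivity), hPr]
    exact one_le_rpow one_le_two hδ
  have hr₁ : r < 1 := by
    have hPk : 1 ≤ P ^ k := one_le_pow₀ (by linarith)
    have : 1 / (2 * P ^ k) ≤ 1 / 2 := by gcongr; linarith
    nlinarith
  rw [sdkSum_eq_geom]
  refine geom_sum_lt_one k hr₁ ?_
  calc P * r - 1 < 1 / (2 * P ^ k) := by rwa [hPr]
    _ = 1 / 2 * (P ^ k)⁻¹ := by ring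
    _ ≤ (1 - P⁻¹) * (P ^ k)⁻¹ := by
      gcongr
      linarith [inv_anti₀ two_pos hP]
    _ = (P - 1) * P⁻¹ ^ (k + 1) := by
      rw [inv_pow, pow_succ]
      field_simp
    _ ≤ (P - 1) * r ^ (k + 1) := by gcongr; linarith

lemma two_rpow_sub_one_lt {Q : ℝ} (hQ : 2 ≤ Q) :
    (2 : ℝ) ^ (2 / (5 * log 2 * Q)) - 1 < 1 / (2 * Q) := by
  have hlog : log 2 * (2 / (5 * log 2 * Q)) = 2 / (5 * Q) := by
    field_simp [(log_pos one_lt_two).ne']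
  rw [rpow_def_of_pos two_pos, hlog]
  have hy : 2 / (5 * Q) ≤ 1 / 5 := by
    rw [div_le_div_iff₀ (by positivity) (by norm_num)]
    linarith
  calc exp (2 / (5 * Q)) - 1 < 5 / 4 * (2 / (5 * Q)) := exp_sub_one_lt (by positivity) hy
    _ = 1 / (2 * Q) := by field_simp; ring

lemma two_pow_ceil_logb_lt {x : ℝ} (hx : 1 ≤ x) : (2 : ℝ) ^ ⌈logb 2 x⌉₊ < 2 * x := by
  have hceil := Nat.ceil_lt_add_one (logb_nonneg one_lt_two hx)
  calc (2 : ℝ) ^ ⌈logb 2 x⌉₊ = 2 ^ (⌈logb 2 x⌉₊ : ℝ) := (rpow_natCast _ _).symm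
    _ < 2 ^ (logb 2 x + 1) := rpow_lt_rpow_of_exponent_lt one_lt_two hceil
    _ = 2 * x := by
      rw [rpow_add two_pos, rpow_logb two_pos (by norm_num) (by linarith), rpow_one, mul_comm]

lemma cd_mul_pow_lt {d k : ℕ} {α : ℝ} (hd : 1 ≤ d) (hα : 0 < α) (hk : 2 ^ k * α < 8 * √d) :
    2 / (5 * log 2 * 2 ^ (4 * d) * (d : ℝ) ^ ((d : ℝ) / 2)) * α ^ d <
      ((2 : ℝ) ^ d)⁻¹ * (2 / (5 * log 2 * 2 ^ (d * k))) := by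
  have hdd : (d : ℝ) ^ ((d : ℝ) / 2) = √d ^ d := by
    rw [sqrt_eq_rpow, ← rpow_natCast, ← rpow_mul (Nat.cast_nonneg d)]
    ring_nf
  have h16 : (2 : ℝ) ^ (4 * d) = 2 ^ d * 8 ^ d := by
    rw [pow_mul, ← mul_pow]; norm_num
  have hpow : (2 : ℝ) ^ (d * k) * α ^ d < 8 ^ d * √d ^ d := by
    rw [mul_comm d k, pow_mul, ← mul_pow, ← mul_pow]
    exact pow_lt_pow_left₀ hk (by positivity) (by omega)
  have hL := log_pos one_lt_two
  rw [hdd, h16, div_mul_eq_mul_div, inv_mul_eq_div, div_div,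
    div_lt_div_iff₀ (by positivity) (by positivity)]
  nlinarith [mul_lt_mul_of_pos_left hpow (by positivity : (0 : ℝ) < 10 * log 2 * 2 ^ d)]

/-- Let `d ≥ 1`, `0 < α ≤ 1/2`, `k(α) = ⌈log₂(4√d/α)⌉` and
`t_{d,α}(ε) = 2^{-d}·t_{d,k(α)}(ε)`. Then there is `ε₀ > 0` such that for all `ε ∈ [0,ε₀]`,
`t_{d,α}(ε) > c_d·α^d`, where `c_d = 2/(5·log 2·2^{4d}·d^{d/2})`. In particular this holds
at `ε = 0`. -/
theorem tdalpha_lower_bound_near_zero (d : ℕ) (hd : 1 ≤ d) (α : ℝ)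
    (hα : 0 < α) (hα' : α ≤ 1 / 2) :
    ∃ ε₀ > (0 : ℝ),
      (∀ ε ∈ Set.Icc (0 : ℝ) ε₀,
        2 / (5 * Real.log 2 * 2 ^ (4 * d) * (d : ℝ) ^ ((d : ℝ) / 2)) * α ^ d <
          ((2 : ℝ) ^ d)⁻¹ * tdk d (⌈Real.logb 2 (4 * Real.sqrt d / α)⌉₊) ε) ∧
      2 / (5 * Real.log 2 * 2 ^ (4 * d) * (d : ℝ) ^ ((d : ℝ) / 2)) * α ^ d <
        ((2 : ℝ) ^ d)⁻¹ * tdk d (⌈Real.logb 2 (4 * Real.sqrt d / α)⌉₊) 0 := by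
  set k := ⌈logb 2 (4 * √d / α)⌉₊
  set δ : ℝ := 2 / (5 * log 2 * 2 ^ (d * k))
  have hx : 8 ≤ 4 * √d / α := by
    have : (1 : ℝ) ≤ √d := one_le_sqrt.mpr (by exact_mod_cast hd)
    rw [le_div_iff₀ hα]
    linarith
  have hk : 1 ≤ k := Nat.one_le_ceil_iff.mpr (logb_pos one_lt_two (by linarith))
  have hQ : (2 : ℝ) ≤ 2 ^ (d * k) := by
    simpa using pow_le_pow_right₀ one_le_two (Nat.one_le_iff_ne_zero.mpr (by positivity))
  have hδ : 0 ≤ δ := by positivity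
  have hδd : δ ≤ d := by
    have : δ ≤ 1 := by
      rw [div_le_one (by positivity)]
      nlinarith [log_two_gt_d9]
    linarith [show (1 : ℝ) ≤ d by exact_mod_cast hd]
  obtain ⟨ε₀, hε₀, hle⟩ := mem_nhdsGE_iff_exists_Icc_subset.mp <|
    eventually_sdk_le hd hk (sub_nonneg.2 hδd) (sdkSum_lt_one hd k hδ (two_rpow_sub_one_lt hQ))
  have hδt : ∀ ε ∈ Icc 0 ε₀, δ ≤ tdk d k ε := fun ε hε ↦ by
    unfold tdk
    linarith [show sdk d k ε ≤ d - δ from hle hε]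
  have hc : 2 / (5 * log 2 * 2 ^ (4 * d) * (d : ℝ) ^ ((d : ℝ) / 2)) * α ^ d <
      (2 ^ d)⁻¹ * δ := by
    refine cd_mul_pow_lt hd hα ?_
    calc (2 : ℝ) ^ k * α < 2 * (4 * √d / α) * α :=
          mul_lt_mul_of_pos_right (two_pow_ceil_logb_lt (by linarith)) hα
      _ = 8 * √d := by field_simp; ring
  refine ⟨ε₀, hε₀, fun ε hε ↦ hc.trans_le ?_, hc.trans_le ?_⟩ <;> gcongr
  exacts [hδt ε hε, hδt 0 ⟨le_rfl, hε₀.le⟩]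
end

section
/- Let δ > 0, let R* be a δ-regular tree of cubes with root [0,1)^d, and let μ be a Borel probability measure on [0,1)^d. Then dim_P(μ) equals the μ-essential supremum over x of limsup_{n→∞} log(1/μ(R_n(x))) / log(1/ℓ(R_n(x))). -/
open MeasureTheory Filter Metric Set
open scoped ENNReal NNReal

/-- The unit cube `[0,1)^d`. -/
def unitCube (d : ℕ) : Set (EuclideanSpace ℝ (Fin d)) :=
  {x | ∀ j : Fin d, 0 ≤ x j ∧ x j < 1}

/-- The half-open axis-parallel cube with corner `a` and side `l`. -/
def cubeSet {d : ℕ} (a : EuclideanSpace ℝ (Fin d)) (l : ℝ) : Set (EuclideanSpace ℝ (Fin d)) :=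
  {y | ∀ j : Fin d, a j ≤ y j ∧ y j < a j + l}

/-- A `δ`-regular tree of half-open cubes with root `[0,1)^d`, encoded by the functions
`x ↦ R_n(x)` (given by a corner and a side length). At each level the cubes containing
points of the unit cube form a partition of their parent into finitely many cubes,
and all side ratios lie in `[δ, 1−δ]`. -/
structure CubeTree (d : ℕ) (δ : ℝ) where
  corner : ℕ → EuclideanSpace ℝ (Fin d) → EuclideanSpace ℝ (Fin d)
  side : ℕ → EuclideanSpace ℝ (Fin d) → ℝ
  corner_zero : ∀ x ∈ unitCube d, corner 0 x = 0
  side_zero : ∀ x ∈ unitCube d, side 0 x = 1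
  mem_node : ∀ n, ∀ x ∈ unitCube d, x ∈ cubeSet (corner n x) (side n x)
  side_pos : ∀ n, ∀ x ∈ unitCube d, 0 < side n x
  compat : ∀ n, ∀ x ∈ unitCube d, ∀ y ∈ unitCube d,
    y ∈ cubeSet (corner n x) (side n x) → corner n y = corner n x ∧ side n y = side n x
  nested : ∀ n, ∀ x ∈ unitCube d,
    cubeSet (corner (n + 1) x) (side (n + 1) x) ⊆ cubeSet (corner n x) (side n x)
  regular : ∀ n, ∀ x ∈ unitCube d,
    δ ≤ side (n + 1) x / side n x ∧ side (n + 1) x / side n x ≤ 1 - δ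
  finiteChildren : ∀ n, ∀ x ∈ unitCube d,
    Set.Finite {c : EuclideanSpace ℝ (Fin d) × ℝ |
      ∃ y ∈ unitCube d, y ∈ cubeSet (corner n x) (side n x) ∧
        c = (corner (n + 1) y, side (n + 1) y)}

/-- The cube `R_n(x)` of the tree, as a set. -/
def CubeTree.node {d : ℕ} {δ : ℝ} (T : CubeTree d δ) (n : ℕ)
    (x : EuclideanSpace ℝ (Fin d)) : Set (EuclideanSpace ℝ (Fin d)) :=
  cubeSet (T.corner n x) (T.side n x)

/-- The offspring of the cube `R_n(x)`, as (corner, side) pairs. -/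
def CubeTree.children {d : ℕ} {δ : ℝ} (T : CubeTree d δ) (n : ℕ)
    (x : EuclideanSpace ℝ (Fin d)) : Set (EuclideanSpace ℝ (Fin d) × ℝ) :=
  {c | ∃ y ∈ unitCube d, y ∈ T.node n x ∧ c = (T.corner (n + 1) y, T.side (n + 1) y)}

/-- The entropy `H(R_n(x)) = Σ_{R ∈ R(Q)} μ^Q(R)·log(1/μ^Q(R))` where `μ^Q(R) = μ(R)/μ(Q)`. -/
noncomputable def treeEntropy {d : ℕ} {δ : ℝ} (μ : Measure (EuclideanSpace ℝ (Fin d)))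
    (T : CubeTree d δ) (n : ℕ) (x : EuclideanSpace ℝ (Fin d)) : ℝ :=
  ∑ᶠ c ∈ T.children n x,
    Real.negMulLog ((μ (cubeSet c.1 c.2)).toReal / (μ (T.node n x)).toReal)

/-- The Lyapunov exponent `λ(R_n(x)) = Σ_{R ∈ R(Q)} μ^Q(R)·log(ℓ(Q)/ℓ(R))`. -/
noncomputable def treeLyap {d : ℕ} {δ : ℝ} (μ : Measure (EuclideanSpace ℝ (Fin d)))
    (T : CubeTree d δ) (n : ℕ) (x : EuclideanSpace ℝ (Fin d)) : ℝ :=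
  ∑ᶠ c ∈ T.children n x,
    ((μ (cubeSet c.1 c.2)).toReal / (μ (T.node n x)).toReal) * Real.log (T.side n x / c.2)

/-- The upper local dimension of a measure at a point:
`limsup_{r→0⁺} log μ(B(x,r)) / log r` (closed balls), as an extended real. -/
noncomputable def upperLocalDim {d : ℕ} (μ : Measure (EuclideanSpace ℝ (Fin d)))
    (x : EuclideanSpace ℝ (Fin d)) : EReal :=
  Filter.limsup
    (fun r : ℝ => ((Real.log ((μ (Metric.closedBall x r)).toReal) / Real.log r : ℝ) : EReal))
    (nhdsWithin (0 : ℝ) (Set.Ioi 0))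

/-- The (upper) packing dimension of a measure: the `μ`-essential supremum of the
upper local dimensions. -/
noncomputable def packingDim {d : ℕ} (μ : Measure (EuclideanSpace ℝ (Fin d))) : EReal :=
  essSup (fun x => upperLocalDim μ x) μ

/-! Both inequalities compare `R_n(x)` with balls centred at `x`. The cube `R_n(x)` lies in
`B(x, √d ℓ(R_n(x)))` and consecutive side lengths differ by a factor at least `δ`, so every small
ball `B(x, r)` contains some `R_{n+1}(x)` with `log (1/r) ≥ log (1/ℓ(R_{n+1}(x))) - O(1)`: the
upper local dimension is at most the tree limsup wherever the cubes `R_n(x)` have positive mass.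

Conversely `B(x, ℓ(R_n(x)))` lies in the concentric cube `3R_n(x)` of triple side. Comparing
volumes, a point lies in at most `(n + 1)(4/δ)^d` of the cubes `3R`, `R ∈ R_n`, so
`∑_{R ∈ R_n} μ(3R) ≤ (n + 1)(4/δ)^d`, and Borel–Cantelli gives `μ(3R_n(x)) ≤ e^{εn} μ(R_n(x))`
eventually, for every `ε > 0` and `μ`-a.e. `x`. As `log (1/ℓ(R_n(x))) ≥ n log (1/(1-δ))`, the
factor `e^{εn}` costs at most `ε / log (1/(1-δ))` in the tree quotient. -/

open Real Finset Topology

section Cubes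

variable {d : ℕ}

local notation "𝔼" => EuclideanSpace ℝ (Fin d)

def tripleCube (a : 𝔼) (l : ℝ) : Set 𝔼 :=
  cubeSet (WithLp.toLp 2 fun j => a j - l) (3 * l)

lemma unitCube_eq_cubeSet : unitCube d = cubeSet (0 : 𝔼) 1 := by
  ext y
  simp [unitCube, cubeSet]

lemma cubeSet_eq_preimage (a : 𝔼) (l : ℝ) :
    cubeSet a l = (MeasurableEquiv.toLp 2 (Fin d → ℝ)).symm ⁻¹'
      Set.univ.pi fun j => Ico (a j) (a j + l) := by
  ext y
  simp [cubeSet]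

lemma measurableSet_cubeSet (a : 𝔼) (l : ℝ) : MeasurableSet (cubeSet a l) := by
  rw [cubeSet_eq_preimage]
  exact (MeasurableSet.univ_pi fun _ => measurableSet_Ico).preimage (MeasurableEquiv.measurable _)

lemma measurableSet_unitCube : MeasurableSet (unitCube d) :=
  unitCube_eq_cubeSet ▸ measurableSet_cubeSet 0 1

lemma volume_cubeSet (a : 𝔼) (l : ℝ) : volume (cubeSet a l) = ENNReal.ofReal l ^ d := by
  rw [cubeSet_eq_preimage,
    (EuclideanSpace.volume_preserving_symm_measurableEquiv_toLp (Fin d)).measure_preimage_equiv,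
    volume_pi_pi]
  simp

lemma cubeSet_subset_closedBall {a x : 𝔼} {l : ℝ} (hl : 0 ≤ l) (hx : x ∈ cubeSet a l) :
    cubeSet a l ⊆ closedBall x (√d * l) := by
  intro y hy
  rw [mem_closedBall, EuclideanSpace.dist_eq, ← Real.sqrt_sq hl,
    ← Real.sqrt_mul (Nat.cast_nonneg _)]
  refine Real.sqrt_le_sqrt ?_
  calc ∑ j, dist (y j) (x j) ^ 2 ≤ ∑ _j : Fin d, l ^ 2 := by
        refine sum_le_sum fun j _ => pow_le_pow_left₀ dist_nonneg ?_ 2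
        rw [Real.dist_eq, abs_le]
        constructor <;> linarith [hx j, hy j]
    _ = d * l ^ 2 := by simp

lemma closedBall_subset_tripleCube {a x : 𝔼} {l : ℝ} (hx : x ∈ cubeSet a l) :
    closedBall x l ⊆ tripleCube a l := by
  intro y hy j
  have hyx := (PiLp.dist_apply_le y x j).trans (mem_closedBall.1 hy)
  rw [Real.dist_eq, abs_le] at hyx
  constructor <;> linarith [hx j]

lemma cubeSet_subset_of_mem_tripleCube {a y : 𝔼} {l L : ℝ} (hy : y ∈ tripleCube a l)
    (hlL : l ≤ L) : cubeSet a l ⊆ cubeSet (WithLp.toLp 2 fun j => y j - 2 * L) (4 * L) := by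
  intro z hz j
  have hyj := hy j
  simp only at hyj ⊢
  constructor <;> linarith [hz j]

lemma card_mul_pow_le_of_pairwiseDisjoint {H : Finset (𝔼 × ℝ)}
    (hH : (H : Set (𝔼 × ℝ)).PairwiseDisjoint fun p => cubeSet p.1 p.2) {s L : ℝ} (hs : 0 ≤ s)
    (hL : 0 ≤ L) (hside : ∀ p ∈ H, s ≤ p.2) {b : 𝔼}
    (hsub : ∀ p ∈ H, cubeSet p.1 p.2 ⊆ cubeSet b L) :
    (#H : ℝ) * s ^ d ≤ L ^ d := by
  have key : (#H : ℝ≥0∞) * ENNReal.ofReal s ^ d ≤ ENNReal.ofReal L ^ d := calc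
    _ = ∑ _p ∈ H, ENNReal.ofReal s ^ d := by simp
    _ ≤ ∑ p ∈ H, volume (cubeSet p.1 p.2) :=
        sum_le_sum fun p hp => by rw [volume_cubeSet]; gcongr; exact hside p hp
    _ = volume (⋃ p ∈ H, cubeSet p.1 p.2) :=
        (measure_biUnion_finset hH fun p _ => measurableSet_cubeSet p.1 p.2).symm
    _ ≤ volume (cubeSet b L) := measure_mono (iUnion₂_subset hsub)
    _ = ENNReal.ofReal L ^ d := volume_cubeSet b L
  rwa [← ENNReal.ofReal_pow hs, ← ENNReal.ofReal_pow hL, ← ENNReal.ofReal_natCast,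
    ← ENNReal.ofReal_mul (by positivity), ENNReal.ofReal_le_ofReal_iff (by positivity)] at key

end Cubes

open scoped Classical in
lemma sum_measure_le_of_card_filter_le {α ι : Type*} [MeasurableSpace α] (μ : Measure α)
    {s : Finset ι} {t : ι → Set α} (ht : ∀ i ∈ s, MeasurableSet (t i)) {M : ℝ≥0∞}
    (hM : ∀ y, (#{i ∈ s | y ∈ t i} : ℝ≥0∞) ≤ M) : ∑ i ∈ s, μ (t i) ≤ M * μ univ := by
  calc ∑ i ∈ s, μ (t i) = ∫⁻ y, ∑ i ∈ s, (t i).indicator (fun _ => 1) y ∂μ := by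
        rw [lintegral_finsetSum' _ fun i hi => aemeasurable_const.indicator (ht i hi)]
        exact sum_congr rfl fun i hi => (lintegral_indicator_one (ht i hi)).symm
    _ = ∫⁻ y, (#{i ∈ s | y ∈ t i} : ℝ≥0∞) ∂μ := by
        simp only [Set.indicator_apply, sum_boole]
    _ ≤ ∫⁻ _, M ∂μ := lintegral_mono hM
    _ = M * μ univ := lintegral_const M

lemma EReal.limsup_coe_le_limsup_coe {α β : Type*} {f : Filter α} {g : Filter β} {u : α → ℝ}
    {v : β → ℝ} (h : ∀ b c : ℝ, b < c → (∀ᶠ a in f, u a ≤ b) → ∀ᶠ y in g, v y ≤ c) :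
    limsup (fun y => (v y : EReal)) g ≤ limsup (fun a => (u a : EReal)) f := by
  refine EReal.le_of_forall_lt_iff_le.1 fun c hc => ?_
  obtain ⟨b, hub, hbc⟩ := EReal.exists_between_coe_real hc
  have hu : ∀ᶠ a in f, u a ≤ b :=
    (eventually_lt_of_limsup_lt hub).mono fun a ha => (EReal.coe_lt_coe_iff.1 ha).le
  refine limsup_le_of_le (by isBoundedDefault) ?_
  filter_upwards [h b c (EReal.coe_lt_coe_iff.1 hbc) hu] with y hy
  exact EReal.coe_le_coe_iff.2 hy

lemma exists_le_lt_of_tendsto_zero {ℓ : ℕ → ℝ} (hℓ : Tendsto ℓ atTop (𝓝 0)) {r : ℝ} (hr : 0 < r)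
    {N : ℕ} (hN : r ≤ ℓ N) : ∃ n ≥ N, r ≤ ℓ n ∧ ℓ (n + 1) < r := by
  by_contra! h
  have hge : ∀ n ≥ N, r ≤ ℓ n := fun n hn => Nat.le_induction hN (fun k hk ih => h k hk ih) n hn
  obtain ⟨n, hn, hNn⟩ := ((hℓ.eventually (gt_mem_nhds hr)).and (eventually_ge_atTop N)).exists
  exact (hge n hNn).not_gt hn

lemma summable_natCast_add_one_mul_div_exp {ε : ℝ} (hε : 0 < ε) (C : ℝ) :
    Summable fun n : ℕ => (n + 1) * C / exp (ε * n) := by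
  refine (((summable_pow_mul_exp_neg_nat_mul 1 hε).add
    (summable_pow_mul_exp_neg_nat_mul 0 hε)).mul_right C).congr fun n => ?_
  rw [div_eq_mul_inv, ← exp_neg]
  ring_nf

section GeometricDecay

variable {ℓ : ℕ → ℝ} {ρ : ℝ}

lemma pos_of_le_pow (hℓ_pos : ∀ n, 0 < ℓ n) (hℓ_pow : ∀ n, ℓ n ≤ ρ ^ n) : 0 < ρ := by
  simpa using (hℓ_pos 1).trans_le (hℓ_pow 1)

lemma tendsto_nhdsGT_zero_of_le_pow (hρ : ρ < 1) (hℓ_pos : ∀ n, 0 < ℓ n)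
    (hℓ_pow : ∀ n, ℓ n ≤ ρ ^ n) : Tendsto ℓ atTop (𝓝[>] 0) :=
  tendsto_nhdsWithin_of_tendsto_nhds_of_eventually_within _
    (squeeze_zero (fun n => (hℓ_pos n).le) hℓ_pow
      (tendsto_pow_atTop_nhds_zero_of_lt_one (pos_of_le_pow hℓ_pos hℓ_pow).le hρ))
    (Eventually.of_forall hℓ_pos)

lemma nat_mul_neg_log_le_neg_log_of_le_pow (hℓ_pos : ∀ n, 0 < ℓ n) (hℓ_pow : ∀ n, ℓ n ≤ ρ ^ n)
    (n : ℕ) : n * -log ρ ≤ -log (ℓ n) := by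
  rw [mul_neg, neg_le_neg_iff, ← Real.log_pow]
  exact Real.log_le_log (hℓ_pos n) (hℓ_pow n)

lemma tendsto_neg_log_of_le_pow (hρ : ρ < 1) (hℓ_pos : ∀ n, 0 < ℓ n)
    (hℓ_pow : ∀ n, ℓ n ≤ ρ ^ n) : Tendsto (fun n => -log (ℓ n)) atTop atTop :=
  tendsto_atTop_mono (nat_mul_neg_log_le_neg_log_of_le_pow hℓ_pos hℓ_pow)
    (tendsto_natCast_atTop_atTop.atTop_mul_const
      (neg_pos.2 (Real.log_neg (pos_of_le_pow hℓ_pos hℓ_pow) hρ)))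

end GeometricDecay

section LocalDimension

variable {X : Type*} [PseudoMetricSpace X] [MeasurableSpace X] {μ : Measure X} {x : X}
  {Q : ℕ → Set X} {ℓ : ℕ → ℝ} {ρ a : ℝ}

lemma measure_closedBall_ne_zero_of_subset (hℓ : Tendsto ℓ atTop (𝓝 0))
    (hQ : ∀ n, Q n ⊆ closedBall x (a * ℓ n)) (hQ_pos : ∀ n, μ (Q n) ≠ 0) {r : ℝ} (hr : 0 < r) :
    μ (closedBall x r) ≠ 0 := by
  have : Tendsto (fun n => a * ℓ n) atTop (𝓝 0) := by simpa using hℓ.const_mul a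
  obtain ⟨n, hn⟩ := (this.eventually (gt_mem_nhds hr)).exists
  exact fun h => hQ_pos n (measure_mono_null ((hQ n).trans (closedBall_subset_closedBall hn.le)) h)

lemma limsup_log_closedBall_le_limsup_log [IsProbabilityMeasure μ] (hρ : ρ < 1)
    (hℓ_pos : ∀ n, 0 < ℓ n) (hℓ_pow : ∀ n, ℓ n ≤ ρ ^ n) {δ : ℝ} (hδ : 0 < δ)
    (hℓ_succ : ∀ n, δ * ℓ n ≤ ℓ (n + 1)) (hQ : ∀ n, Q n ⊆ closedBall x (a * ℓ n))
    (hQ_pos : ∀ n, μ (Q n) ≠ 0) :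
    limsup (fun r => ((log (μ (closedBall x r)).toReal / log r : ℝ) : EReal)) (𝓝[>] 0) ≤
      limsup (fun n => ((log (1 / (μ (Q n)).toReal) / log (1 / ℓ n) : ℝ) : EReal)) atTop := by
  -- enlarging `a` to `A = max a 1` makes the radii `A * ℓ n` positive
  obtain ⟨A, hA, hQA⟩ : ∃ A > 0, ∀ n, Q n ⊆ closedBall x (A * ℓ n) :=
    ⟨max a 1, by positivity, fun n => (hQ n).trans
      (closedBall_subset_closedBall (mul_le_mul_of_nonneg_right (le_max_left a 1) (hℓ_pos n).le))⟩
  clear hQ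
  have hℓ := tendsto_nhds_of_tendsto_nhdsWithin (tendsto_nhdsGT_zero_of_le_pow hρ hℓ_pos hℓ_pow)
  have hAℓ : Tendsto (fun n => A * ℓ n) atTop (𝓝 0) := by simpa using hℓ.const_mul A
  have hm_pos (n : ℕ) : 0 < (μ (Q n)).toReal := ENNReal.toReal_pos (hQ_pos n) (measure_ne_top μ _)
  have hm_le (n : ℕ) : (μ (Q n)).toReal ≤ 1 := measureReal_le_one
  simp only [one_div, Real.log_inv]
  refine EReal.limsup_coe_le_limsup_coe fun b c hbc hb => ?_
  have hev : ∀ᶠ n in atTop, 0 < -log (ℓ n) ∧ -log (μ (Q n)).toReal ≤ b * -log (ℓ n) ∧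
      c * (log A - log δ) ≤ (c - b) * -log (ℓ n) ∧ A * ℓ n < 1 := by
    have hs := tendsto_neg_log_of_le_pow hρ hℓ_pos hℓ_pow
    filter_upwards [hb, hs.eventually_gt_atTop 0,
      (hs.const_mul_atTop (sub_pos.2 hbc)).eventually_ge_atTop (c * (log A - log δ)),
      hAℓ.eventually (gt_mem_nhds one_pos)] with n hnb hs_pos hsc hn1
    exact ⟨hs_pos, (div_le_iff₀ hs_pos).1 hnb, hsc, hn1⟩
  obtain ⟨N, hN⟩ := eventually_atTop.1 hev
  have hb0 : 0 ≤ b := by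
    obtain ⟨hs_pos, hmb, -⟩ := hN N le_rfl
    nlinarith [Real.log_nonpos (hm_pos N).le (hm_le N)]
  filter_upwards [Ioc_mem_nhdsGT (mul_pos hA (hℓ_pos N))] with r ⟨hr0, hrN⟩
  obtain ⟨n, hnN, hrn, hrn1⟩ := exists_le_lt_of_tendsto_zero hAℓ hr0 hrN
  have hF : μ (Q (n + 1)) ≤ μ (closedBall x r) :=
    measure_mono ((hQA _).trans (closedBall_subset_closedBall hrn1.le))
  have hlogF : log (μ (Q (n + 1))).toReal ≤ log (μ (closedBall x r)).toReal :=
    Real.log_le_log (hm_pos _) (ENNReal.toReal_mono (measure_ne_top μ _) hF)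
  have hlogr : log r ≤ log A - log δ + log (ℓ (n + 1)) := by
    have h1 := Real.log_le_log hr0 hrn
    have h2 := Real.log_le_log (mul_pos hδ (hℓ_pos n)) (hℓ_succ n)
    rw [Real.log_mul hA.ne' (hℓ_pos n).ne'] at h1
    rw [Real.log_mul hδ.ne' (hℓ_pos n).ne'] at h2
    linarith
  have hr1 : log r < 0 := Real.log_neg hr0 (hrn.trans_lt (hN n hnN).2.2.2)
  rw [div_le_iff_of_neg hr1]
  obtain ⟨-, hmb, hsc, -⟩ := hN (n + 1) (by omega)
  -- `c log r ≤ c (log A - log δ + log ℓ (n+1)) ≤ b log ℓ (n+1) ≤ log μ(Q (n+1)) ≤ log μ(B(x, r))`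
  linarith [mul_le_mul_of_nonneg_left hlogr (hb0.trans hbc.le)]

lemma limsup_log_le_limsup_log_closedBall [IsFiniteMeasure μ] (hρ : ρ < 1)
    (hℓ_pos : ∀ n, 0 < ℓ n) (hℓ_pow : ∀ n, ℓ n ≤ ρ ^ n) (hball : ∀ n, μ (closedBall x (ℓ n)) ≠ 0)
    (hQ_pos : ∀ n, μ (Q n) ≠ 0)
    (hgrowth : ∀ ε > 0, ∀ᶠ n in atTop,
      μ (closedBall x (ℓ n)) ≤ ENNReal.ofReal (exp (ε * n)) * μ (Q n)) :
    limsup (fun n => ((log (1 / (μ (Q n)).toReal) / log (1 / ℓ n) : ℝ) : EReal)) atTop ≤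
      limsup (fun r => ((log (μ (closedBall x r)).toReal / log r : ℝ) : EReal)) (𝓝[>] 0) := by
  have hκ : 0 < -log ρ := neg_pos.2 (Real.log_neg (pos_of_le_pow hℓ_pos hℓ_pow) hρ)
  simp only [one_div, Real.log_inv]
  refine EReal.limsup_coe_le_limsup_coe fun b c hbc hb => ?_
  filter_upwards [(tendsto_nhdsGT_zero_of_le_pow hρ hℓ_pos hℓ_pow).eventually hb,
    hgrowth ((c - b) * -log ρ) (mul_pos (sub_pos.2 hbc) hκ),
    (tendsto_neg_log_of_le_pow hρ hℓ_pos hℓ_pow).eventually_gt_atTop 0] with n hnb hng hs_pos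
  have hF_pos : 0 < (μ (closedBall x (ℓ n))).toReal :=
    ENNReal.toReal_pos (hball n) (measure_ne_top μ _)
  have hm_pos : 0 < (μ (Q n)).toReal := ENNReal.toReal_pos (hQ_pos n) (measure_ne_top μ _)
  have hlogF :
      log (μ (closedBall x (ℓ n))).toReal ≤ (c - b) * -log ρ * n + log (μ (Q n)).toReal := by
    have := ENNReal.toReal_mono (ENNReal.mul_ne_top ENNReal.ofReal_ne_top (measure_ne_top μ _)) hng
    rw [ENNReal.toReal_mul, ENNReal.toReal_ofReal (exp_pos _).le] at this
    calc log (μ (closedBall x (ℓ n))).toReal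
        ≤ log (exp ((c - b) * -log ρ * n) * (μ (Q n)).toReal) := Real.log_le_log hF_pos this
      _ = _ := by rw [Real.log_mul (exp_pos _).ne' hm_pos.ne', Real.log_exp]
  have hbF : b * log (ℓ n) ≤ log (μ (closedBall x (ℓ n))).toReal :=
    (div_le_iff_of_neg (by linarith)).1 hnb
  have hκn := mul_le_mul_of_nonneg_left (nat_mul_neg_log_le_neg_log_of_le_pow hℓ_pos hℓ_pow n)
    (sub_pos.2 hbc).le
  rw [div_le_iff₀ hs_pos]
  -- `-log μ(Q n) ≤ (c - b) n (-log ρ) - log μ(B(x, ℓ n)) ≤ (c - b) (-log ℓ n) - b log ℓ n`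
  linarith

end LocalDimension

namespace CubeTree

variable {d : ℕ} {δ : ℝ} (T : CubeTree d δ) {x : EuclideanSpace ℝ (Fin d)}

local notation "𝔼" => EuclideanSpace ℝ (Fin d)

lemma mul_side_le_side_succ (hx : x ∈ unitCube d) (n : ℕ) :
    δ * T.side n x ≤ T.side (n + 1) x :=
  (le_div_iff₀ (T.side_pos n x hx)).1 (T.regular n x hx).1

lemma side_succ_le_mul_side (hx : x ∈ unitCube d) (n : ℕ) :
    T.side (n + 1) x ≤ (1 - δ) * T.side n x :=
  (div_le_iff₀ (T.side_pos n x hx)).1 (T.regular n x hx).2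

lemma le_half (T : CubeTree d δ) : δ ≤ 1 / 2 := by
  have hx : (0 : 𝔼) ∈ unitCube d := by simp [unitCube_eq_cubeSet, cubeSet]
  linarith [(T.regular 0 0 hx).1.trans (T.regular 0 0 hx).2]

lemma side_le_pow (hx : x ∈ unitCube d) (n : ℕ) : T.side n x ≤ (1 - δ) ^ n := by
  have hδ : 0 ≤ 1 - δ := by linarith [T.le_half]
  induction n with
  | zero => simp [T.side_zero x hx]
  | succ n ih =>
    calc T.side (n + 1) x ≤ (1 - δ) * T.side n x := T.side_succ_le_mul_side hx n
      _ ≤ (1 - δ) * (1 - δ) ^ n := by gcongr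
      _ = (1 - δ) ^ (n + 1) := by ring

lemma pow_le_side (hδ : 0 ≤ δ) (hx : x ∈ unitCube d) (n : ℕ) : δ ^ n ≤ T.side n x := by
  induction n with
  | zero => simp [T.side_zero x hx]
  | succ n ih =>
    calc δ ^ (n + 1) = δ * δ ^ n := by ring
      _ ≤ δ * T.side n x := by gcongr
      _ ≤ T.side (n + 1) x := T.mul_side_le_side_succ hx n

lemma node_subset_closedBall (hx : x ∈ unitCube d) (n : ℕ) :
    T.node n x ⊆ closedBall x (√d * T.side n x) :=
  cubeSet_subset_closedBall (T.side_pos n x hx).le (T.mem_node n x hx)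

lemma node_subset_unitCube (hx : x ∈ unitCube d) (n : ℕ) : T.node n x ⊆ unitCube d := by
  induction n with
  | zero =>
    rw [node, T.corner_zero x hx, T.side_zero x hx, unitCube_eq_cubeSet]
  | succ n ih => exact (T.nested n x hx).trans ih

def level (n : ℕ) : Set (𝔼 × ℝ) :=
  (fun y => (T.corner n y, T.side n y)) '' unitCube d

lemma finite_level (n : ℕ) : (T.level n).Finite := by
  induction n with
  | zero =>
    refine (Set.finite_singleton (0, 1)).subset ?_
    rintro _ ⟨y, hy, rfl⟩
    simp [T.corner_zero y hy, T.side_zero y hy]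
  | succ n ih =>
    have hsub : T.level (n + 1) ⊆ ⋃ p ∈ T.level n, {c | ∃ y ∈ unitCube d,
        y ∈ cubeSet p.1 p.2 ∧ c = (T.corner (n + 1) y, T.side (n + 1) y)} := by
      rintro _ ⟨y, hy, rfl⟩
      exact mem_biUnion ⟨y, hy, rfl⟩ ⟨y, hy, T.mem_node n y hy, rfl⟩
    refine (ih.biUnion fun p hp => ?_).subset hsub
    obtain ⟨y, hy, rfl⟩ := hp
    exact T.finiteChildren n y hy

lemma eq_of_mem_level {n : ℕ} {p : 𝔼 × ℝ} (hp : p ∈ T.level n) {y : 𝔼}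
    (hy : y ∈ cubeSet p.1 p.2) : (T.corner n y, T.side n y) = p := by
  obtain ⟨z, hz, rfl⟩ := hp
  obtain ⟨h1, h2⟩ := T.compat n z hz y (T.node_subset_unitCube hz n hy) hy
  rw [h1, h2]

lemma pairwiseDisjoint_level (n : ℕ) :
    (T.level n).PairwiseDisjoint fun p => cubeSet p.1 p.2 := fun _ hp _ hq hpq =>
  Set.disjoint_left.2 fun _ hyp hyq =>
    hpq ((T.eq_of_mem_level hp hyp).symm.trans (T.eq_of_mem_level hq hyq))

lemma side_mem_Icc_of_mem_level (hδ : 0 ≤ δ) {n : ℕ} {p : 𝔼 × ℝ} (hp : p ∈ T.level n) :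
    p.2 ∈ Icc (δ ^ n) 1 := by
  obtain ⟨y, hy, rfl⟩ := hp
  exact ⟨T.pow_le_side hδ hy n,
    (T.side_le_pow hy n).trans (pow_le_one₀ (by linarith [T.le_half]) (by linarith))⟩

open scoped Classical in
/-- Level-`n` cubes of side in `[δ^(k+1), δ^k]` whose triples contain `y` are disjoint and fit in
a cube of side `4 δ^k`, so there are at most `(4/δ)^d` of them for each `k ≤ n`. -/
lemma card_filter_mem_tripleCube_le (hδ : 0 < δ) (n : ℕ) (y : 𝔼) :
    (#{p ∈ (T.finite_level n).toFinset | y ∈ tripleCube p.1 p.2} : ℝ) ≤ (n + 1) * (4 / δ) ^ d := by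
  set G := {p ∈ (T.finite_level n).toFinset | y ∈ tripleCube p.1 p.2}
  have hG {p : 𝔼 × ℝ} (hp : p ∈ G) : p ∈ T.level n ∧ y ∈ tripleCube p.1 p.2 := by
    simpa [G] using hp
  have hδ1 : δ < 1 := by linarith [T.le_half]
  have hclass (k : ℕ) : (#{p ∈ G | δ ^ (k + 1) ≤ p.2 ∧ p.2 ≤ δ ^ k} : ℝ) ≤ (4 / δ) ^ d := by
    have hcard := card_mul_pow_le_of_pairwiseDisjoint
      (H := {p ∈ G | δ ^ (k + 1) ≤ p.2 ∧ p.2 ≤ δ ^ k})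
      ((T.pairwiseDisjoint_level n).subset fun p hp => (hG (mem_filter.1 hp).1).1)
      (by positivity) (by positivity : (0 : ℝ) ≤ 4 * δ ^ k) (fun p hp => (mem_filter.1 hp).2.1)
      fun p hp => cubeSet_subset_of_mem_tripleCube (hG (mem_filter.1 hp).1).2 (mem_filter.1 hp).2.2
    have hscale : (4 * δ ^ k) ^ d = (4 / δ) ^ d * (δ ^ (k + 1)) ^ d := by
      rw [← mul_pow]; congr 1; field_simp; ring
    rw [hscale] at hcard
    exact le_of_mul_le_mul_right hcard (by positivity)
  have hcover : G ⊆ (range (n + 1)).biUnion fun k => {p ∈ G | δ ^ (k + 1) ≤ p.2 ∧ p.2 ≤ δ ^ k} := by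
    intro p hp
    obtain ⟨hlow, hup⟩ := T.side_mem_Icc_of_mem_level hδ.le (hG hp).1
    obtain ⟨k, hk1, hk2⟩ := exists_nat_pow_near_of_lt_one ((pow_pos hδ n).trans_le hlow) hup hδ hδ1
    have hkn : k ≤ n := (pow_le_pow_iff_right_of_lt_one₀ hδ hδ1).1 (hlow.trans hk2)
    exact mem_biUnion.2 ⟨k, mem_range.2 (by omega), mem_filter.2 ⟨hp, hk1.le, hk2⟩⟩
  calc (#G : ℝ) ≤ ∑ k ∈ range (n + 1), (#{p ∈ G | δ ^ (k + 1) ≤ p.2 ∧ p.2 ≤ δ ^ k} : ℝ) := by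
        exact_mod_cast (Finset.card_le_card hcover).trans card_biUnion_le
    _ ≤ ∑ _k ∈ range (n + 1), (4 / δ) ^ d := sum_le_sum fun k _ => hclass k
    _ = (n + 1) * (4 / δ) ^ d := by simp

lemma sum_measure_tripleCube_le (hδ : 0 < δ) (μ : Measure 𝔼) (n : ℕ) :
    ∑ p ∈ (T.finite_level n).toFinset, μ (tripleCube p.1 p.2) ≤
      ENNReal.ofReal ((n + 1) * (4 / δ) ^ d) * μ univ := by
  refine sum_measure_le_of_card_filter_le μ (fun p _ => measurableSet_cubeSet _ _) fun y => ?_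
  rw [← ENNReal.ofReal_natCast]
  exact ENNReal.ofReal_le_ofReal (T.card_filter_mem_tripleCube_le hδ n y)

lemma mul_measure_setOf_lt_le (μ : Measure 𝔼) (n : ℕ) (t : ℝ≥0∞) :
    t * μ {x | x ∈ unitCube d ∧ t * μ (T.node n x) < μ (tripleCube (T.corner n x) (T.side n x))} ≤
      ∑ p ∈ (T.finite_level n).toFinset, μ (tripleCube p.1 p.2) := by
  classical
  set B := {p ∈ (T.finite_level n).toFinset | t * μ (cubeSet p.1 p.2) < μ (tripleCube p.1 p.2)}
  have hsub : {x | x ∈ unitCube d ∧ t * μ (T.node n x) < μ (tripleCube (T.corner n x) (T.side n x))}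
      ⊆ ⋃ p ∈ B, cubeSet p.1 p.2 := by
    rintro x ⟨hx, hbad⟩
    refine mem_iUnion₂.2 ⟨(T.corner n x, T.side n x), ?_, T.mem_node n x hx⟩
    simpa [B] using ⟨⟨x, hx, rfl⟩, hbad⟩
  calc _ ≤ t * ∑ p ∈ B, μ (cubeSet p.1 p.2) :=
        mul_le_mul_right ((measure_mono hsub).trans (measure_biUnion_finset_le _ _)) t
    _ = ∑ p ∈ B, t * μ (cubeSet p.1 p.2) := mul_sum _ _ _
    _ ≤ ∑ p ∈ B, μ (tripleCube p.1 p.2) := sum_le_sum fun p hp => (mem_filter.1 hp).2.le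
    _ ≤ _ := sum_le_sum_of_subset (filter_subset _ _)

lemma ae_eventually_measure_tripleCube_le (hδ : 0 < δ) (μ : Measure 𝔼) [IsProbabilityMeasure μ]
    {ε : ℝ} (hε : 0 < ε) :
    ∀ᵐ x ∂μ, ∀ᶠ n in atTop, x ∈ unitCube d →
      μ (tripleCube (T.corner n x) (T.side n x)) ≤
        ENNReal.ofReal (exp (ε * n)) * μ (T.node n x) := by
  set C := (4 / δ) ^ d
  have hbad (n : ℕ) : μ {x | x ∈ unitCube d ∧ ENNReal.ofReal (exp (ε * n)) * μ (T.node n x) <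
      μ (tripleCube (T.corner n x) (T.side n x))} ≤ ENNReal.ofReal ((n + 1) * C / exp (ε * n)) := by
    rw [ENNReal.ofReal_div_of_pos (exp_pos _), ENNReal.le_div_iff_mul_le (by simp [exp_pos])
      (Or.inl ENNReal.ofReal_ne_top), mul_comm]
    simpa using (T.mul_measure_setOf_lt_le μ n _).trans (T.sum_measure_tripleCube_le hδ μ n)
  have hsum : ∑' n : ℕ, ENNReal.ofReal ((n + 1) * C / exp (ε * n)) ≠ ⊤ := by
    rw [← ENNReal.ofReal_tsum_of_nonneg (fun n => by positivity)
      (summable_natCast_add_one_mul_div_exp hε C)]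
    exact ENNReal.ofReal_ne_top
  filter_upwards [ae_eventually_notMem (ne_top_of_le_ne_top hsum (ENNReal.tsum_le_tsum hbad))]
    with x hx
  filter_upwards [hx] with n hn hxU
  simpa [hxU] using hn

lemma ae_measure_closedBall_side_le (hδ : 0 < δ) (μ : Measure 𝔼) [IsProbabilityMeasure μ] :
    ∀ᵐ x ∂μ, x ∈ unitCube d → ∀ ε > 0, ∀ᶠ n in atTop,
      μ (closedBall x (T.side n x)) ≤ ENNReal.ofReal (exp (ε * n)) * μ (T.node n x) := by
  filter_upwards [ae_all_iff.2 fun k : ℕ =>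
    T.ae_eventually_measure_tripleCube_le hδ μ (Nat.one_div_pos_of_nat (n := k))] with x hx hxU ε hε
  obtain ⟨k, hk⟩ := exists_nat_one_div_lt hε
  filter_upwards [hx k] with n hn
  calc μ (closedBall x (T.side n x)) ≤ μ (tripleCube (T.corner n x) (T.side n x)) :=
        measure_mono (closedBall_subset_tripleCube (T.mem_node n x hxU))
    _ ≤ ENNReal.ofReal (exp (1 / (k + 1) * n)) * μ (T.node n x) := hn hxU
    _ ≤ ENNReal.ofReal (exp (ε * n)) * μ (T.node n x) := by gcongr

lemma ae_measure_node_ne_zero (μ : Measure 𝔼) :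
    ∀ᵐ x ∂μ, x ∈ unitCube d → ∀ n, μ (T.node n x) ≠ 0 := by
  have h (n : ℕ) : ∀ᵐ x ∂μ, x ∈ unitCube d → μ (T.node n x) ≠ 0 := by
    have hnull : μ (⋃ p ∈ {p ∈ T.level n | μ (cubeSet p.1 p.2) = 0}, cubeSet p.1 p.2) = 0 :=
      (measure_biUnion_null_iff ((T.finite_level n).subset (sep_subset _ _)).countable).2
        fun p hp => hp.2
    rw [ae_iff]
    refine measure_mono_null (fun x hx => ?_) hnull
    push Not at hx
    exact mem_iUnion₂.2 ⟨_, ⟨⟨x, hx.1, rfl⟩, hx.2⟩, T.mem_node n x hx.1⟩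
  filter_upwards [ae_all_iff.2 h] with x hx hxU n using hx n hxU

lemma upperLocalDim_eq_limsup (hδ : 0 < δ) (μ : Measure 𝔼) [IsProbabilityMeasure μ]
    (hx : x ∈ unitCube d) (hpos : ∀ n, μ (T.node n x) ≠ 0)
    (hgrowth : ∀ ε > 0, ∀ᶠ n in atTop,
      μ (closedBall x (T.side n x)) ≤ ENNReal.ofReal (exp (ε * n)) * μ (T.node n x)) :
    upperLocalDim μ x = limsup (fun n =>
      ((log (1 / (μ (T.node n x)).toReal) / log (1 / T.side n x) : ℝ) : EReal)) atTop := by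
  have hρ : 1 - δ < 1 := by linarith
  have hℓ_pos (n : ℕ) : 0 < T.side n x := T.side_pos n x hx
  have hℓ := tendsto_nhds_of_tendsto_nhdsWithin
    (tendsto_nhdsGT_zero_of_le_pow hρ hℓ_pos (T.side_le_pow hx))
  exact le_antisymm
    (limsup_log_closedBall_le_limsup_log hρ hℓ_pos (T.side_le_pow hx) hδ
      (T.mul_side_le_side_succ hx) (T.node_subset_closedBall hx) hpos)
    (limsup_log_le_limsup_log_closedBall hρ hℓ_pos (T.side_le_pow hx)
      (fun n => measure_closedBall_ne_zero_of_subset hℓ (T.node_subset_closedBall hx) hpos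
        (hℓ_pos n))
      hpos hgrowth)

end CubeTree

theorem packingDim_eq_essSup_tree_localDim_general (d : ℕ) (δ : ℝ) (hδ : 0 < δ)
    (T : CubeTree d δ) (μ : Measure (EuclideanSpace ℝ (Fin d))) [IsProbabilityMeasure μ]
    (hsupp : μ (unitCube d) = 1) :
    packingDim μ = essSup (fun x =>
      Filter.limsup (fun n : ℕ =>
        ((Real.log (1 / (μ (T.node n x)).toReal) / Real.log (1 / T.side n x) : ℝ) : EReal))
        Filter.atTop) μ := by
  have hU : ∀ᵐ x ∂μ, x ∈ unitCube d := by
    rw [ae_mem_iff_measure_eq measurableSet_unitCube.nullMeasurableSet, hsupp, measure_univ]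
  refine essSup_congr_ae ?_
  filter_upwards [hU, T.ae_measure_node_ne_zero μ, T.ae_measure_closedBall_side_le hδ μ]
    with x hx hpos hgrowth
  exact T.upperLocalDim_eq_limsup hδ μ hx (hpos hx) (hgrowth hx)

/-- For a `δ`-regular tree of cubes `R*` with root `[0,1)^d` and a Borel
probability measure `μ` on `[0,1)^d`, the packing dimension of `μ` equals the `μ`-essential
supremum of `limsup_n log(1/μ(R_n(x))) / log(1/ℓ(R_n(x)))`. -/
theorem packingDim_eq_essSup_tree_localDim (d : ℕ) (hd : 1 ≤ d) (δ : ℝ) (hδ : 0 < δ)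
    (T : CubeTree d δ) (μ : Measure (EuclideanSpace ℝ (Fin d))) [IsProbabilityMeasure μ]
    (hsupp : μ (unitCube d) = 1) :
    packingDim μ = essSup (fun x =>
      Filter.limsup (fun n : ℕ =>
        ((Real.log (1 / (μ (T.node n x)).toReal) / Real.log (1 / T.side n x) : ℝ) : EReal))
        Filter.atTop) μ :=
  packingDim_eq_essSup_tree_localDim_general d δ hδ T μ hsupp
end

section
/- Let d, k ≥ 1 be integers, N = (2^d−1)·k + 1, and let (α_1,…,α_N) be the vector consisting of 2^{-1} repeated 2^d−1 times, then 2^{-2} repeated 2^d−1 times, …, then 2^{-(k-1)} repeated 2^d−1 times, and finally 2^{-k} repeated 2^d times. For ε ∈ [0, 2^{-kd}], the supremum of ( Σ_{i=1}^N p_i·log(1/p_i) ) / ( Σ_{i=1}^N p_i·log(1/α_i) ) over all probability vectors (p_1,…,p_N) (p_i ≥ 0, Σ p_i = 1) satisfying p_N ≤ ε equals s_{d,k}(ε), and this supremum is attained. -/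
open MeasureTheory Filter Metric Set
open scoped ENNReal NNReal

/-- The exponent of the `i`-th entry (0-indexed) of the vector `(α_1,…,α_N)`:
the entries are `2^{-1}` repeated `2^d−1` times, …, `2^{-(k-1)}` repeated `2^d−1` times,
and `2^{-k}` repeated `2^d` times, so `α_i = 2^{-expo d k i}`. -/
def expo (d k : ℕ) (i : ℕ) : ℕ := min (i / (2 ^ d - 1) + 1) k

/-!
Write `w i = log (1 / α i)` for the costs and `Z = ∑_{i < N} α_i ^ s` for the partition function
of the first `N - 1` coordinates. Gibbs' inequality bounds the entropy of a probability vector `p`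
by its cross entropy `-∑ p_i log r_i` against any reference distribution `r`. Take for `r` the
Gibbs distribution `α ^ s / Z` on the first `N - 1` coordinates, rescaled to mass `1 - ε`, with
mass `ε` on the last one: then the cross entropy is `s ∑ p_i w_i + (1 - p_N) L + p_N M` with
`L = log (Z / (1 - ε))` and `M = log (1 / ε) - s w_N`. The equation defining `s = s_{d,k}(ε)` reads
`(1 - ε) L + ε M = 0`, and `s ≤ d` gives `ε ≤ α_N ^ s`, i.e. `L ≤ 0 ≤ M`. Hence `p_N ≤ ε` forces
`H(p) ≤ s ∑ p_i w_i`, with equality at `p = r`.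

That `s_{d,k}(ε)` is the unique root, and lies in `[0, d]`, follows from the intermediate value
theorem: the difference of the two sides of its equation is strictly decreasing in `s`,
nonnegative at `0`, and nonpositive at `d` by Gibbs' inequality for two-point distributions.
-/

open Real

theorem negMulLog_le_neg_mul_log_add_sub {p r : ℝ} (hp : 0 ≤ p) (hr : 0 < r) :
    negMulLog p ≤ -(p * log r) + (r - p) := by
  rcases hp.eq_or_lt with rfl | hp
  · simpa using hr.le
  have hlog : p * log (r / p) ≤ r - p := by
    calc p * log (r / p) ≤ p * (r / p - 1) :=
          mul_le_mul_of_nonneg_left (log_le_sub_one_of_pos (div_pos hr hp)) hp.le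
      _ = r - p := by field_simp
  rw [log_div hr.ne' hp.ne'] at hlog
  rw [negMulLog]
  linarith

theorem sum_negMulLog_le_neg_sum_mul_log {ι : Type*} [Fintype ι] {p r : ι → ℝ}
    (hp : ∀ i, 0 ≤ p i) (hr : ∀ i, 0 ≤ r i) (hpr : ∀ i, r i = 0 → p i = 0)
    (hsum : ∑ i, p i = ∑ i, r i) :
    ∑ i, negMulLog (p i) ≤ -∑ i, p i * log (r i) := by
  have hterm : ∀ i, negMulLog (p i) ≤ -(p i * log (r i)) + (r i - p i) := by
    intro i
    rcases (hr i).eq_or_lt with h0 | hpos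
    · simp [hpr i h0.symm, ← h0]
    · exact negMulLog_le_neg_mul_log_add_sub (hp i) hpos
  calc ∑ i, negMulLog (p i) ≤ ∑ i, (-(p i * log (r i)) + (r i - p i)) :=
        Finset.sum_le_sum fun i _ => hterm i
    _ = -∑ i, p i * log (r i) := by
        rw [Finset.sum_add_distrib, Finset.sum_sub_distrib, hsum, Finset.sum_neg_distrib]
        ring

theorem sum_mul_log_one_div_pos {ι : Type*} [Fintype ι] {p α : ι → ℝ} (hp : ∀ i, 0 ≤ p i)
    (hp1 : ∑ i, p i = 1) (hα0 : ∀ i, 0 < α i) (hα1 : ∀ i, α i < 1) :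
    0 < ∑ i, p i * log (1 / α i) := by
  obtain ⟨i, -, hi⟩ : ∃ i ∈ Finset.univ, (0 : ℝ) < p i :=
    Finset.exists_lt_of_sum_lt (by simp [hp1])
  refine Finset.sum_pos' (fun j _ => mul_nonneg (hp j) ?_) ⟨i, Finset.mem_univ i, mul_pos hi ?_⟩
  · exact (log_pos ((one_lt_div (hα0 j)).2 (hα1 j))).le
  · exact log_pos ((one_lt_div (hα0 i)).2 (hα1 i))

section CappedGibbs

variable {m : ℕ} {α : Fin (m + 1) → ℝ} {ε s : ℝ}

noncomputable def cappedGibbs (α : Fin (m + 1) → ℝ) (ε s : ℝ) : Fin (m + 1) → ℝ :=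
  Fin.lastCases ε fun j => (1 - ε) * α j.castSucc ^ s / ∑ j' : Fin m, α j'.castSucc ^ s

@[simp] theorem cappedGibbs_last : cappedGibbs α ε s (Fin.last m) = ε := by
  simp [cappedGibbs]

@[simp] theorem cappedGibbs_castSucc (j : Fin m) :
    cappedGibbs α ε s j.castSucc =
      (1 - ε) * α j.castSucc ^ s / ∑ j' : Fin m, α j'.castSucc ^ s := by
  simp [cappedGibbs]

theorem sum_rpow_castSucc_pos (hm : 0 < m) (hα0 : ∀ i, 0 < α i) :
    0 < ∑ j : Fin m, α j.castSucc ^ s :=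
  Finset.sum_pos (fun _ _ => rpow_pos_of_pos (hα0 _) s) ⟨⟨0, hm⟩, Finset.mem_univ _⟩

theorem cappedGibbs_castSucc_pos (hm : 0 < m) (hα0 : ∀ i, 0 < α i) (hε1 : ε < 1) (j : Fin m) :
    0 < cappedGibbs α ε s j.castSucc := by
  rw [cappedGibbs_castSucc]
  exact div_pos (mul_pos (sub_pos.2 hε1) (rpow_pos_of_pos (hα0 _) s)) (sum_rpow_castSucc_pos hm hα0)

theorem cappedGibbs_nonneg (hm : 0 < m) (hα0 : ∀ i, 0 < α i) (hε0 : 0 ≤ ε) (hε1 : ε < 1)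
    (i : Fin (m + 1)) : 0 ≤ cappedGibbs α ε s i := by
  induction i using Fin.lastCases with
  | last => simpa using hε0
  | cast j => exact (cappedGibbs_castSucc_pos hm hα0 hε1 j).le

theorem sum_cappedGibbs (hm : 0 < m) (hα0 : ∀ i, 0 < α i) : ∑ i, cappedGibbs α ε s i = 1 := by
  have hZ := (sum_rpow_castSucc_pos (s := s) hm hα0).ne'
  simp only [Fin.sum_univ_castSucc, cappedGibbs_castSucc, cappedGibbs_last, ← Finset.sum_div,
    ← Finset.mul_sum]
  field_simp
  ring

theorem neg_sum_mul_log_cappedGibbs (hm : 0 < m) (hα0 : ∀ i, 0 < α i) (hε1 : ε < 1)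
    {p : Fin (m + 1) → ℝ} (hp1 : ∑ i, p i = 1) :
    -∑ i, p i * log (cappedGibbs α ε s i) =
      s * ∑ i, p i * log (1 / α i)
        + (1 - p (Fin.last m)) * log ((∑ j : Fin m, α j.castSucc ^ s) / (1 - ε))
        + p (Fin.last m) * (log (1 / ε) - s * log (1 / α (Fin.last m))) := by
  set Z := ∑ j : Fin m, α j.castSucc ^ s
  have hZ : 0 < Z := sum_rpow_castSucc_pos hm hα0
  have hfirst : ∑ j : Fin m, p j.castSucc = 1 - p (Fin.last m) := by
    rw [Fin.sum_univ_castSucc] at hp1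
    linarith
  have hlog : ∀ j : Fin m, log (cappedGibbs α ε s j.castSucc) =
      -log (Z / (1 - ε)) - s * log (1 / α j.castSucc) := by
    intro j
    have hαj := rpow_pos_of_pos (hα0 j.castSucc) s
    rw [cappedGibbs_castSucc, log_div (by positivity) hZ.ne', log_mul (by linarith) hαj.ne',
      log_div hZ.ne' (by linarith), log_rpow (hα0 _), one_div, log_inv]
    ring
  simp only [Fin.sum_univ_castSucc, hlog, cappedGibbs_last, one_div, log_inv, mul_sub,
    mul_neg, Finset.sum_sub_distrib, Finset.sum_neg_distrib, ← Finset.sum_mul, hfirst]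
  have hcost : ∑ j : Fin m, p j.castSucc * (s * log (α j.castSucc)) =
      s * ∑ j : Fin m, p j.castSucc * log (α j.castSucc) := by
    rw [Finset.mul_sum]
    exact Finset.sum_congr rfl fun _ _ => by ring
  rw [hcost]
  ring

theorem isGreatest_entropy_div_cost (hm : 0 < m) (hα0 : ∀ i, 0 < α i) (hα1 : ∀ i, α i < 1)
    (hε0 : 0 ≤ ε) (hε1 : ε < 1) (hεα : ε ≤ α (Fin.last m) ^ s)
    (hs : (1 - ε) * log ((∑ j : Fin m, α j.castSucc ^ s) / (1 - ε)) + ε * log (1 / ε)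
      = s * ε * log (1 / α (Fin.last m))) :
    IsGreatest {v : ℝ | ∃ p : Fin (m + 1) → ℝ, (∀ i, 0 ≤ p i) ∧ ∑ i, p i = 1 ∧
      p (Fin.last m) ≤ ε ∧ v = (∑ i, negMulLog (p i)) / ∑ i, p i * log (1 / α i)} s := by
  set L := log ((∑ j : Fin m, α j.castSucc ^ s) / (1 - ε)) with hL
  set M := log (1 / ε) - s * log (1 / α (Fin.last m)) with hM
  have hbalance : (1 - ε) * L + ε * M = 0 := by linear_combination hs
  -- the cap is active: the bound `(1 - t) L + t M` increases with the last mass `t`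
  have hslope : ∀ t, 0 ≤ t → t ≤ ε → (ε - t) * (L - M) ≤ 0 := by
    intro t ht0 htε
    rcases hε0.eq_or_lt with rfl | hεpos
    · simp [le_antisymm htε ht0]
    have hαs := rpow_pos_of_pos (hα0 (Fin.last m)) s
    have hM0 : 0 ≤ M := by
      have : M = log (α (Fin.last m) ^ s / ε) := by
        rw [hM, log_div hαs.ne' hεpos.ne', log_rpow (hα0 _), one_div, one_div, log_inv, log_inv]
        ring
      exact this ▸ log_nonneg ((one_le_div hεpos).2 hεα)
    have hL0 : L ≤ 0 := by nlinarith
    exact mul_nonpos_of_nonneg_of_nonpos (by linarith) (by linarith)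
  set r := cappedGibbs α ε s
  have hrε : r (Fin.last m) = ε := cappedGibbs_last
  have hr0 : ∀ i, 0 ≤ r i := cappedGibbs_nonneg hm hα0 hε0 hε1
  have hr1 : ∑ i, r i = 1 := sum_cappedGibbs hm hα0
  refine ⟨⟨r, hr0, hr1, hrε.le, ?_⟩, ?_⟩
  · have hD := sum_mul_log_one_div_pos hr0 hr1 hα0 hα1
    have hH : ∑ i, negMulLog (r i) = -∑ i, r i * log (r i) := by
      simp [negMulLog, Finset.sum_neg_distrib]
    rw [eq_div_iff hD.ne', hH, neg_sum_mul_log_cappedGibbs hm hα0 hε1 hr1, hrε, ← hL, ← hM]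
    linear_combination -hbalance
  · rintro v ⟨p, hp0, hp1, hpε, rfl⟩
    have hD := sum_mul_log_one_div_pos hp0 hp1 hα0 hα1
    have hgibbs := sum_negMulLog_le_neg_sum_mul_log hp0 hr0 ?_ (hp1.trans hr1.symm)
    · rw [neg_sum_mul_log_cappedGibbs hm hα0 hε1 hp1, ← hL, ← hM] at hgibbs
      rw [div_le_iff₀ hD]
      nlinarith [hslope _ (hp0 _) hpε]
    · intro i hri
      induction i using Fin.lastCases with
      | last => exact le_antisymm (hri ▸ hrε ▸ hpε) (hp0 _)
      | cast j => exact absurd hri (cappedGibbs_castSucc_pos hm hα0 hε1 j).ne'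

end CappedGibbs

section Sdk

variable {d k : ℕ} {ε : ℝ}

noncomputable def partitionFn (d k : ℕ) (s : ℝ) : ℝ :=
  ((2 : ℝ) ^ d - 1) * ∑ i ∈ Finset.range k, (2 : ℝ) ^ (-(s * ((i : ℝ) + 1)))

noncomputable def sdkGap (d k : ℕ) (ε s : ℝ) : ℝ :=
  (1 - ε) * log (partitionFn d k s / (1 - ε)) + ε * log (1 / ε) - s * ε * log ((2 : ℝ) ^ k)

theorem two_pow_sub_one_pos (hd : 1 ≤ d) : (0 : ℝ) < 2 ^ d - 1 :=
  sub_pos.2 (one_lt_pow₀ one_lt_two (by omega))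

theorem partitionFn_pos (hd : 1 ≤ d) (hk : 1 ≤ k) (s : ℝ) : 0 < partitionFn d k s :=
  mul_pos (two_pow_sub_one_pos hd) <| Finset.sum_pos (fun _ _ => rpow_pos_of_pos two_pos _)
    (Finset.nonempty_range_iff.2 (by omega))

theorem partitionFn_strictAnti (hd : 1 ≤ d) (hk : 1 ≤ k) : StrictAnti (partitionFn d k) := by
  intro a b hab
  refine mul_lt_mul_of_pos_left ?_ (two_pow_sub_one_pos hd)
  refine Finset.sum_lt_sum_of_nonempty (Finset.nonempty_range_iff.2 (by omega)) fun i _ => ?_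
  rw [rpow_lt_rpow_left_iff one_lt_two, neg_lt_neg_iff]
  exact mul_lt_mul_of_pos_right hab (by positivity)

theorem continuous_partitionFn : Continuous (partitionFn d k) :=
  continuous_const.mul <| continuous_finsetSum _ fun _ _ =>
    continuous_const.rpow (by fun_prop) fun _ => Or.inl two_ne_zero

theorem partitionFn_zero : partitionFn d k 0 = ((2 : ℝ) ^ d - 1) * k := by
  simp [partitionFn]

theorem partitionFn_natCast : partitionFn d k d = 1 - ((2 : ℝ) ^ (k * d))⁻¹ := by
  set x : ℝ := ((2 : ℝ) ^ d)⁻¹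
  have hterm : ∀ i ∈ Finset.range k, (2 : ℝ) ^ (-((d : ℝ) * ((i : ℝ) + 1))) = x * x ^ i := by
    intro i _
    rw [← pow_succ', show -((d : ℝ) * ((i : ℝ) + 1)) = -((d * (i + 1) : ℕ) : ℝ) by push_cast; ring,
      rpow_neg two_pos.le, rpow_natCast, pow_mul, inv_pow]
  have hx : ((2 : ℝ) ^ d - 1) * x = 1 - x := by
    simp only [x]
    field_simp
  rw [partitionFn, Finset.sum_congr rfl hterm, ← Finset.mul_sum, ← mul_assoc, hx,
    mul_neg_geom_sum, inv_pow, ← pow_mul, mul_comm d k]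

section
variable (hd : 1 ≤ d) (hk : 1 ≤ k)
include hd hk

theorem sdkGap_strictAnti (hε0 : 0 ≤ ε) (hε1 : ε < 1) : StrictAnti (sdkGap d k ε) := by
  intro a b hab
  have h1ε : 0 < 1 - ε := by linarith
  have hlog : log (partitionFn d k b / (1 - ε)) < log (partitionFn d k a / (1 - ε)) :=
    log_lt_log (div_pos (partitionFn_pos hd hk b) h1ε)
      (div_lt_div_of_pos_right (partitionFn_strictAnti hd hk hab) h1ε)
  have hcost : a * ε * log ((2 : ℝ) ^ k) ≤ b * ε * log ((2 : ℝ) ^ k) :=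
    mul_le_mul_of_nonneg_right (mul_le_mul_of_nonneg_right hab.le hε0)
      (log_nonneg (one_le_pow₀ one_le_two))
  simp only [sdkGap]
  nlinarith

theorem continuous_sdkGap (hε1 : ε < 1) : Continuous (sdkGap d k ε) := by
  have h1ε : 1 - ε ≠ 0 := by linarith
  have hlog : Continuous fun s => log (partitionFn d k s / (1 - ε)) :=
    (continuous_partitionFn.div_const _).log fun s => div_ne_zero (partitionFn_pos hd hk s).ne' h1ε
  exact ((continuous_const.mul hlog).add continuous_const).sub (by fun_prop)

theorem sdkGap_zero_nonneg (hε0 : 0 ≤ ε) (hε1 : ε < 1) : 0 ≤ sdkGap d k ε 0 := by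
  have hZ : 1 - ε ≤ partitionFn d k 0 := by
    rw [partitionFn_zero]
    have hk1 : (1 : ℝ) ≤ k := by exact_mod_cast hk
    have h2d : (2 : ℝ) ≤ 2 ^ d := by simpa using pow_le_pow_right₀ (one_le_two (α := ℝ)) hd
    nlinarith
  have h1 : 0 ≤ log (partitionFn d k 0 / (1 - ε)) :=
    log_nonneg ((one_le_div (by linarith)).2 hZ)
  have h2 : 0 ≤ log (1 / ε) := by
    rcases hε0.eq_or_lt with rfl | hεpos
    · simp
    · exact log_nonneg ((one_le_div hεpos).2 hε1.le)
  simp only [sdkGap, zero_mul, sub_zero]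
  exact add_nonneg (mul_nonneg (by linarith) h1) (mul_nonneg hε0 h2)

/-- This is Gibbs' inequality for the two-point distributions `(1 - ε, ε)` and
`(1 - 2^{-kd}, 2^{-kd})`. -/
theorem sdkGap_natCast_nonpos (hε0 : 0 ≤ ε) (hε1 : ε < 1) : sdkGap d k ε d ≤ 0 := by
  set a : ℝ := ((2 : ℝ) ^ (k * d))⁻¹ with ha
  have ha0 : 0 < a := by positivity
  have ha1 : a < 1 := inv_lt_one_of_one_lt₀ (one_lt_pow₀ one_lt_two (by positivity))
  have h1a : 0 < 1 - a := by linarith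
  have hgibbs := sum_negMulLog_le_neg_sum_mul_log (p := ![1 - ε, ε]) (r := ![1 - a, a])
    (Fin.forall_fin_two.2 ⟨by simpa using hε1.le, by simpa using hε0⟩)
    (Fin.forall_fin_two.2 ⟨by simpa using h1a.le, by simpa using ha0.le⟩)
    (Fin.forall_fin_two.2 ⟨fun h => absurd h (by simpa using h1a.ne'),
      fun h => absurd h (by simpa using ha0.ne')⟩)
    (by simp)
  have hloga : log a = -((d : ℝ) * log ((2 : ℝ) ^ k)) := by
    rw [ha, log_inv, log_pow, log_pow]
    push_cast
    ring
  simp only [Fin.sum_univ_two, Matrix.cons_val_zero, Matrix.cons_val_one, negMulLog] at hgibbs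
  rw [sdkGap, partitionFn_natCast, ← ha, log_div (by linarith) (by linarith), one_div, log_inv]
  nlinarith

theorem exists_le_sdkGap_eq_zero (hε0 : 0 ≤ ε) (hε1 : ε < 1) :
    ∃ s ≤ (d : ℝ), sdkGap d k ε s = 0 := by
  obtain ⟨s, hs, hs0⟩ := intermediate_value_Icc' (Nat.cast_nonneg d)
    (continuous_sdkGap hd hk hε1).continuousOn
    ⟨sdkGap_natCast_nonpos hd hk hε0 hε1, sdkGap_zero_nonneg hd hk hε0 hε1⟩
  exact ⟨s, hs.2, hs0⟩

theorem sdk_eq_of_sdkGap_eq_zero (hε0 : 0 ≤ ε) (hε1 : ε < 1) {s : ℝ} (hs : sdkGap d k ε s = 0) :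
    sdk d k ε = s := by
  have hzeros : {s' : ℝ | (1 - ε) * log (((2 : ℝ) ^ d - 1) *
      (∑ i ∈ Finset.range k, (2 : ℝ) ^ (-(s' * ((i : ℝ) + 1)))) / (1 - ε))
        + ε * log (1 / ε) = s' * ε * log ((2 : ℝ) ^ k)} = {s} := by
    ext s'
    rw [Set.mem_singleton_iff, ← (sdkGap_strictAnti hd hk hε0 hε1).injective.eq_iff, hs,
      sdkGap, partitionFn, Set.mem_ofPred_eq, sub_eq_zero]
  rw [sdk, hzeros, csSup_singleton]

theorem sdkGap_sdk (hε0 : 0 ≤ ε) (hε1 : ε < 1) : sdkGap d k ε (sdk d k ε) = 0 := by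
  obtain ⟨s, -, hs⟩ := exists_le_sdkGap_eq_zero hd hk hε0 hε1
  rwa [sdk_eq_of_sdkGap_eq_zero hd hk hε0 hε1 hs]

theorem sdk_le (hε0 : 0 ≤ ε) (hε1 : ε < 1) : sdk d k ε ≤ d := by
  obtain ⟨s, hsd, hs⟩ := exists_le_sdkGap_eq_zero hd hk hε0 hε1
  rwa [sdk_eq_of_sdkGap_eq_zero hd hk hε0 hε1 hs]

end

end Sdk

theorem Finset.sum_range_mul_comp_div {M : Type*} [AddCommMonoid M] {n : ℕ} (hn : 0 < n)
    (k : ℕ) (f : ℕ → M) :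
    ∑ i ∈ Finset.range (n * k), f (i / n) = n • ∑ j ∈ Finset.range k, f j := by
  induction k with
  | zero => simp
  | succ k ih =>
    have hblock : ∀ i ∈ Finset.range n, f ((n * k + i) / n) = f k := fun i hi => by
      rw [Nat.mul_add_div hn, Nat.div_eq_of_lt (Finset.mem_range.1 hi), add_zero]
    rw [Nat.mul_succ, Finset.sum_range_add, ih, Finset.sum_congr rfl hblock, Finset.sum_const,
      Finset.card_range, Finset.sum_range_succ, smul_add]

section Expo

variable {d k : ℕ}

theorem Nat.two_pow_sub_one_pos (hd : 1 ≤ d) : 0 < 2 ^ d - 1 :=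
  Nat.sub_pos_of_lt (Nat.one_lt_two_pow (by omega))

theorem one_le_expo (hk : 1 ≤ k) (i : ℕ) : 1 ≤ expo d k i :=
  le_min (Nat.le_add_left 1 _) hk

theorem expo_of_lt (hd : 1 ≤ d) {i : ℕ} (hi : i < (2 ^ d - 1) * k) :
    expo d k i = i / (2 ^ d - 1) + 1 := by
  have : i / (2 ^ d - 1) < k :=
    (Nat.div_lt_iff_lt_mul (Nat.two_pow_sub_one_pos hd)).2 (by rwa [mul_comm] at hi)
  exact min_eq_left (by omega)

theorem expo_last (hd : 1 ≤ d) : expo d k ((2 ^ d - 1) * k) = k := by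
  rw [expo, Nat.mul_div_cancel_left k (Nat.two_pow_sub_one_pos hd)]
  omega

theorem sum_two_rpow_neg_expo (hd : 1 ≤ d) (s : ℝ) :
    ∑ j : Fin ((2 ^ d - 1) * k), ((2 : ℝ) ^ (-(expo d k j : ℝ))) ^ s = partitionFn d k s := by
  rw [Fin.sum_univ_eq_sum_range (fun j => ((2 : ℝ) ^ (-(expo d k j : ℝ))) ^ s),
    Finset.sum_congr rfl fun j hj => by rw [expo_of_lt hd (Finset.mem_range.1 hj)],
    Finset.sum_range_mul_comp_div (Nat.two_pow_sub_one_pos hd) k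
      fun e : ℕ => ((2 : ℝ) ^ (-((e + 1 : ℕ) : ℝ))) ^ s,
    partitionFn, nsmul_eq_mul, Nat.cast_sub Nat.one_le_two_pow, Nat.cast_pow, Nat.cast_ofNat,
    Nat.cast_one]
  congr 1
  refine Finset.sum_congr rfl fun i _ => ?_
  rw [← rpow_mul two_pos.le]
  push_cast
  ring_nf

end Expo

/-- For `d, k ≥ 1`, `N = (2^d−1)·k + 1` and `ε ∈ [0, 2^{-kd}]`, the
supremum of `(Σ p_i·log(1/p_i)) / (Σ p_i·log(1/α_i))` over probability vectors
`(p_1,…,p_N)` with `p_N ≤ ε` equals `s_{d,k}(ε)`, and it is attained. -/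
theorem isGreatest_entropy_ratio (d k : ℕ) (hd : 1 ≤ d) (hk : 1 ≤ k) (ε : ℝ)
    (hε0 : 0 ≤ ε) (hε : ε ≤ ((2 : ℝ) ^ (k * d))⁻¹) :
    IsGreatest
      {v : ℝ | ∃ p : Fin ((2 ^ d - 1) * k + 1) → ℝ,
        (∀ i, 0 ≤ p i) ∧ (∑ i, p i) = 1 ∧
        p ⟨(2 ^ d - 1) * k, Nat.lt_succ_self _⟩ ≤ ε ∧
        v = (∑ i, Real.negMulLog (p i)) /
            (∑ i, p i * Real.log (1 / (2 : ℝ) ^ (-(expo d k (i : ℕ) : ℝ))))}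
      (sdk d k ε) := by
  have hε1 : ε < 1 := hε.trans_lt (inv_lt_one_of_one_lt₀ (one_lt_pow₀ one_lt_two (by positivity)))
  have hlast : ((2 : ℝ) ^ (-(expo d k (Fin.last ((2 ^ d - 1) * k) : ℕ) : ℝ))) = (2 ^ k)⁻¹ := by
    rw [Fin.val_last, expo_last hd, rpow_neg two_pos.le, rpow_natCast]
  refine isGreatest_entropy_div_cost (α := fun i => (2 : ℝ) ^ (-(expo d k (i : ℕ) : ℝ)))
    (Nat.mul_pos (Nat.two_pow_sub_one_pos hd) hk)
    (fun _ => rpow_pos_of_pos two_pos _)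
    (fun i => rpow_lt_one_of_one_lt_of_neg one_lt_two
      (neg_lt_zero.2 (by exact_mod_cast one_le_expo hk i))) hε0 hε1 ?_ ?_
  · rw [hlast]
    calc ε ≤ ((2 : ℝ) ^ (k * d))⁻¹ := hε
      _ = ((2 ^ k)⁻¹) ^ (d : ℝ) := by rw [rpow_natCast, inv_pow, pow_mul]
      _ ≤ ((2 ^ k)⁻¹) ^ sdk d k ε :=
        rpow_le_rpow_of_exponent_ge (by positivity)
          (inv_le_one_of_one_le₀ (one_le_pow₀ one_le_two)) (sdk_le hd hk hε0 hε1)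
  · simp only [Fin.val_castSucc]
    rw [sum_two_rpow_neg_expo hd, hlast, div_inv_eq_mul, one_mul]
    exact sub_eq_zero.1 (sdkGap_sdk hd hk hε0 hε1)
end
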